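/- Let m ≥ 0 be an integer and let n be an integer with n ∉ {0, 1, 2}. Let x be a real number with |x| ≥ 2·cos(π/(4m+2)). Then there exists a real number y with y > x^2 - 2 such that φ(x,y) = 0, where φ(x,y) = S_{n-1}(λ)·α - S_{n-2}(λ) with λ = x^2 - y - (y-2)(y+2-x^2)·S_m(y)·S_{m-1}(y) and α = 1 + (y+2-x^2)·S_{m-1}(y)·(S_m(y) - S_{m-1}(y)). -/

import Mathlib

open Real

/-- Auxiliary sequence for the Chebyshev-like polynomials on natural indices. -/
def Saux {R : Type*} [CommRing R] : ℕ → R → R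
  | 0, _ => 1
  | 1, z => z
  | (n + 2), z => z * Saux (n + 1) z - Saux n z

/-- The Chebyshev-like polynomials `S j` indexed by all integers `j`:
`S 0 z = 1`, `S 1 z = z`, and `S (j + 1) z = z * S j z - S (j - 1) z` for all `j : ℤ`
(so `S (-1) z = 0`, `S (-2) z = -1`, and in general `S (-j) z = -S (j - 2) z`). -/
def S {R : Type*} [CommRing R] (j : ℤ) (z : R) : R :=
  if 0 ≤ j then Saux j.toNat z
  else if j = -1 then 0
  else -Saux (-j - 2).toNat z

/-!
At `y = x ^ 2 - 2` one has `λ = 2` and `α = 1`, so `φ = S_{n-1}(2) - S_{n-2}(2) = n - (n - 1) = 1`;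
by the intermediate value theorem it suffices to find some `y > x ^ 2 - 2` with `φ(x, y) ≤ 0`.
For `y ≥ 2` the values `S_{m-1}(y) ≤ S_m(y)` are nonnegative, hence `λ ≤ x ^ 2 - y` and `α ≥ 1`.
For `n = -1` we have `φ = λ - α`, negative for large `y`. Otherwise `|n| ≥ 2`, and
`c = 2 cos (π / |n|) ∈ [-2, 2)` satisfies `S_{n-1}(c) = 0` and `S_{n-2}(c) = 1`; since `λ` runs
from `2` down to `-∞`, it takes the value `c` at some `y`, where `φ = -1`.
-/

open Polynomial

theorem Saux_eq_eval_chebyshevS {R : Type*} [CommRing R] (k : ℕ) (z : R) :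
    Saux k z = (Chebyshev.S R k).eval z := by
  fun_induction Saux k z with
  | case1 => simp
  | case2 => simp
  | case3 k z ih₂ ih₁ =>
    rw [show ((k + 2 : ℕ) : ℤ) = k + 2 by push_cast; ring, Chebyshev.S_add_two, ih₁, ih₂]
    simp

theorem S_eq_eval_chebyshevS {R : Type*} [CommRing R] (j : ℤ) (z : R) :
    S j z = (Chebyshev.S R j).eval z := by
  unfold S
  split_ifs with hj hj'
  · rw [Saux_eq_eval_chebyshevS, Int.toNat_of_nonneg hj]
  · simp [hj']
  · obtain ⟨k, rfl⟩ : ∃ k : ℕ, j = -k - 2 := ⟨(-j - 2).toNat, by omega⟩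
    rw [Saux_eq_eval_chebyshevS, Chebyshev.S_neg_sub_two, eval_neg]
    congr; omega

@[fun_prop]
theorem continuous_S (j : ℤ) : Continuous fun z : ℝ => S j z := by
  simp only [S_eq_eval_chebyshevS]
  exact (Chebyshev.S ℝ j).continuous

theorem S_apply_two (j : ℤ) : S j (2 : ℝ) = j + 1 := by
  rw [S_eq_eval_chebyshevS, Chebyshev.S_eval_two]

theorem S_sub_one_two_mul_cos {n : ℤ} {θ : ℝ} (hθ : sin θ ≠ 0) (hn : cos (n * θ) = -1) :
    S (n - 1) (2 * cos θ) = 0 := by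
  have hsin : sin (n * θ) = 0 := by nlinarith [sin_sq_add_cos_sq (n * θ)]
  have h := Chebyshev.S_two_mul_real_cos θ (n - 1)
  rw [← S_eq_eval_chebyshevS] at h
  push_cast at h
  rw [sub_add_cancel, hsin] at h
  exact (mul_eq_zero.mp h).resolve_right hθ

theorem S_sub_two_two_mul_cos {n : ℤ} {θ : ℝ} (hθ : sin θ ≠ 0) (hn : cos (n * θ) = -1) :
    S (n - 2) (2 * cos θ) = 1 := by
  have hsin : sin (n * θ) = 0 := by nlinarith [sin_sq_add_cos_sq (n * θ)]
  have h := Chebyshev.S_two_mul_real_cos θ (n - 2)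
  rw [← S_eq_eval_chebyshevS] at h
  push_cast at h
  rw [show ((n : ℝ) - 2 + 1) * θ = n * θ - θ by ring, sin_sub, hsin, hn] at h
  exact mul_right_cancel₀ hθ (by linarith)

theorem exists_S_sub_one_eq_zero_and_S_sub_two_eq_one {n : ℤ} (hn : 2 ≤ |n|) :
    ∃ c : ℝ, -2 ≤ c ∧ c < 2 ∧ S (n - 1) c = 0 ∧ S (n - 2) c = 1 := by
  set θ := π / |(n : ℝ)|
  have hn' : 2 ≤ |(n : ℝ)| := by exact_mod_cast hn
  have hθ₀ : 0 < θ := div_pos pi_pos (by linarith)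
  have hθπ : θ < π := div_lt_self pi_pos (by linarith)
  have hsin : sin θ ≠ 0 := (sin_pos_of_pos_of_lt_pi hθ₀ hθπ).ne'
  have hcos : cos (n * θ) = -1 := by
    have : (n : ℝ) ≠ 0 := fun h => by norm_num [h] at hn'
    rcases abs_choice (n : ℝ) with h | h <;> simp only [θ, h] <;> field_simp
    · exact cos_pi
    · simp
  refine ⟨2 * cos θ, by linarith [neg_one_le_cos θ], ?_, S_sub_one_two_mul_cos hsin hcos,
    S_sub_two_two_mul_cos hsin hcos⟩
  linarith [cos_zero ▸ cos_lt_cos_of_nonneg_of_le_pi le_rfl hθπ.le hθ₀]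

theorem zero_le_S_sub_one_and_le_S (m : ℕ) {y : ℝ} (hy : 2 ≤ y) :
    0 ≤ S ((m : ℤ) - 1) y ∧ S ((m : ℤ) - 1) y ≤ S m y := by
  simp only [S_eq_eval_chebyshevS]
  induction m with
  | zero => simp
  | succ m ih =>
    push_cast
    rw [add_sub_cancel_right, Chebyshev.S_add_one, eval_sub, eval_mul, eval_X]
    constructor <;> nlinarith [ih.1, ih.2]

def rileyLambda (m : ℕ) (x y : ℝ) : ℝ :=
  x ^ 2 - y - (y - 2) * (y + 2 - x ^ 2) * S (m : ℤ) y * S ((m : ℤ) - 1) y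

def rileyAlpha (m : ℕ) (x y : ℝ) : ℝ :=
  1 + (y + 2 - x ^ 2) * S ((m : ℤ) - 1) y * (S (m : ℤ) y - S ((m : ℤ) - 1) y)

def rileyPoly (m : ℕ) (n : ℤ) (x y : ℝ) : ℝ :=
  S (n - 1) (rileyLambda m x y) * rileyAlpha m x y - S (n - 2) (rileyLambda m x y)

section Riley

variable (m : ℕ) (n : ℤ) (x : ℝ)

theorem continuous_rileyLambda : Continuous (rileyLambda m x) := by
  unfold rileyLambda; fun_prop

theorem continuous_rileyAlpha : Continuous (rileyAlpha m x) := by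
  unfold rileyAlpha; fun_prop

theorem continuous_rileyPoly : Continuous (rileyPoly m n x) := by
  have := continuous_rileyLambda m x
  have := continuous_rileyAlpha m x
  unfold rileyPoly; fun_prop

theorem rileyLambda_sq_sub_two : rileyLambda m x (x ^ 2 - 2) = 2 := by
  unfold rileyLambda; ring

theorem rileyAlpha_sq_sub_two : rileyAlpha m x (x ^ 2 - 2) = 1 := by
  unfold rileyAlpha; ring

theorem rileyPoly_sq_sub_two : rileyPoly m n x (x ^ 2 - 2) = 1 := by
  rw [rileyPoly, rileyLambda_sq_sub_two, rileyAlpha_sq_sub_two, S_apply_two, S_apply_two]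
  push_cast; ring

variable {m n x} {y : ℝ}

theorem rileyLambda_le (hy : 2 ≤ y) (hxy : x ^ 2 - 2 ≤ y) : rileyLambda m x y ≤ x ^ 2 - y := by
  obtain ⟨h₀, h₁⟩ := zero_le_S_sub_one_and_le_S m hy
  have : 0 ≤ (y - 2) * (y + 2 - x ^ 2) * S (m : ℤ) y * S ((m : ℤ) - 1) y :=
    mul_nonneg (mul_nonneg (mul_nonneg (by linarith) (by linarith)) (by linarith)) h₀
  unfold rileyLambda; linarith

theorem one_le_rileyAlpha (hy : 2 ≤ y) (hxy : x ^ 2 - 2 ≤ y) : 1 ≤ rileyAlpha m x y := by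
  obtain ⟨h₀, h₁⟩ := zero_le_S_sub_one_and_le_S m hy
  have : 0 ≤ (y + 2 - x ^ 2) * S ((m : ℤ) - 1) y * (S (m : ℤ) y - S ((m : ℤ) - 1) y) :=
    mul_nonneg (mul_nonneg (by linarith) h₀) (by linarith)
  unfold rileyAlpha; linarith

theorem rileyPoly_neg_one : rileyPoly m (-1) x y = rileyLambda m x y - rileyAlpha m x y := by
  rw [rileyPoly, S_eq_eval_chebyshevS, S_eq_eval_chebyshevS, show (-1 : ℤ) - 1 = -2 by rfl,
    Chebyshev.S_neg_two, Chebyshev.S_neg_sub_two, Chebyshev.S_one]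
  simp only [eval_neg, eval_one, eval_X]
  ring

theorem rileyPoly_neg_one_neg (hy : 2 ≤ y) (hxy : x ^ 2 - 1 < y) : rileyPoly m (-1) x y < 0 := by
  rw [rileyPoly_neg_one]
  linarith [rileyLambda_le (m := m) hy (by linarith), one_le_rileyAlpha (m := m) hy (by linarith)]

theorem exists_rileyLambda_eq {c : ℝ} (hc₀ : -2 ≤ c) (hc₂ : c < 2) :
    ∃ y, x ^ 2 - 2 < y ∧ rileyLambda m x y = c := by
  set b := max 2 (x ^ 2) + 2
  have hb : rileyLambda m x b ≤ x ^ 2 - b :=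
    rileyLambda_le (by linarith [le_max_left 2 (x ^ 2)]) (by linarith [le_max_right 2 (x ^ 2)])
  have hc : c ∈ Set.Ico (rileyLambda m x b) (rileyLambda m x (x ^ 2 - 2)) := by
    rw [rileyLambda_sq_sub_two]
    exact ⟨by linarith [le_max_right 2 (x ^ 2)], hc₂⟩
  obtain ⟨y, hy, hyc⟩ := intermediate_value_Ioc' (by linarith [le_max_right 2 (x ^ 2)])
    (continuous_rileyLambda m x).continuousOn hc
  exact ⟨y, hy.1, hyc⟩

theorem exists_rileyPoly_eq_zero_of_nonpos (hy : x ^ 2 - 2 < y) (hφ : rileyPoly m n x y ≤ 0) :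
    ∃ y, x ^ 2 - 2 < y ∧ rileyPoly m n x y = 0 := by
  have h0 : (0 : ℝ) ∈ Set.Ico (rileyPoly m n x y) (rileyPoly m n x (x ^ 2 - 2)) := by
    rw [rileyPoly_sq_sub_two]
    exact ⟨hφ, one_pos⟩
  obtain ⟨z, hz, hz0⟩ := intermediate_value_Ioc' hy.le (continuous_rileyPoly m n x).continuousOn h0
  exact ⟨z, hz.1, hz0⟩

end Riley

theorem stmt14_general (m : ℕ) (n : ℤ) (hn0 : n ≠ 0) (hn1 : n ≠ 1) (x : ℝ) :
    ∃ y : ℝ, x ^ 2 - 2 < y ∧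
      S (n - 1) (x ^ 2 - y - (y - 2) * (y + 2 - x ^ 2) * S (m : ℤ) y * S ((m : ℤ) - 1) y) *
      (1 + (y + 2 - x ^ 2) * S ((m : ℤ) - 1) y * (S (m : ℤ) y - S ((m : ℤ) - 1) y)) -
      S (n - 2) (x ^ 2 - y - (y - 2) * (y + 2 - x ^ 2) * S (m : ℤ) y * S ((m : ℤ) - 1) y) = 0 := by
  rcases eq_or_ne n (-1) with rfl | hn
  · have hb₂ : 2 ≤ max 2 (x ^ 2) + 1 := by linarith [le_max_left 2 (x ^ 2)]
    have hbx : x ^ 2 - 1 < max 2 (x ^ 2) + 1 := by linarith [le_max_right 2 (x ^ 2)]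
    exact exists_rileyPoly_eq_zero_of_nonpos (by linarith) (rileyPoly_neg_one_neg hb₂ hbx).le
  · have h2n : 2 ≤ |n| := by rcases abs_cases n with ⟨h, hs⟩ | ⟨h, hs⟩ <;> rw [h] <;> omega
    obtain ⟨c, hc_ge, hc_lt, hS₁, hS₂⟩ := exists_S_sub_one_eq_zero_and_S_sub_two_eq_one h2n
    obtain ⟨y, hy, hyc⟩ := exists_rileyLambda_eq (m := m) (x := x) hc_ge hc_lt
    refine exists_rileyPoly_eq_zero_of_nonpos hy ?_
    rw [rileyPoly, hyc, hS₁, hS₂]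
    norm_num

theorem stmt14 (m : ℕ) (n : ℤ) (hn0 : n ≠ 0) (hn1 : n ≠ 1) (hn2 : n ≠ 2) (x : ℝ)
    (hx : 2 * Real.cos (Real.pi / (4 * (m : ℝ) + 2)) ≤ |x|) :
    ∃ y : ℝ, x ^ 2 - 2 < y ∧
      S (n - 1) (x ^ 2 - y - (y - 2) * (y + 2 - x ^ 2) * S (m : ℤ) y * S ((m : ℤ) - 1) y) *
      (1 + (y + 2 - x ^ 2) * S ((m : ℤ) - 1) y * (S (m : ℤ) y - S ((m : ℤ) - 1) y)) -
      S (n - 2) (x ^ 2 - y - (y - 2) * (y + 2 - x ^ 2) * S (m : ℤ) y * S ((m : ℤ) - 1) y) = 0 :=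
  stmt14_general m n hn0 hn1 x
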